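/- arXiv:math/0602544 — 4 statements merged into one kernel-verified Lean document; each statement's English description precedes it below -/
import Mathlib

section
/- The reduction relation →_R generated (as compatible closure) by the axioms (β): (λx.M)N ▷ M[x:=N], (π₁): π₁⟨M,N⟩ ▷ M, (π₂): π₂⟨M,N⟩ ▷ N, (δπ): ⟨M,N⟩P ▷ ⟨M P, N P⟩, (π₁λ): π₁(λx.M) ▷ λx.π₁M, and (π₂λ): π₂(λx.M) ▷ λx.π₂M, is confluent: if M →_R* N₁ and M →_R* N₂, then there exists P with N₁ →_R* P and N₂ →_R* P. -/
/-- Untyped lambda terms with pairing and projections, de Bruijn representation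
(so terms are automatically identified up to alpha-equivalence). -/
inductive Tm : Type
  | var : Nat → Tm
  | app : Tm → Tm → Tm
  | lam : Tm → Tm
  | pair : Tm → Tm → Tm
  | p1 : Tm → Tm
  | p2 : Tm → Tm

/-- Shift free de Bruijn indices ≥ d up by one. -/
def Tm.lift (d : Nat) : Tm → Tm
  | .var n => if n < d then .var n else .var (n + 1)
  | .app a b => .app (a.lift d) (b.lift d)
  | .lam a => .lam (a.lift (d + 1))
  | .pair a b => .pair (a.lift d) (b.lift d)
  | .p1 a => .p1 (a.lift d)
  | .p2 a => .p2 (a.lift d)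

/-- Capture-avoiding substitution of s for variable k. -/
def Tm.subst : Tm → Nat → Tm → Tm
  | .var n, k, s => if n = k then s else if n < k then .var n else .var (n - 1)
  | .app a b, k, s => .app (a.subst k s) (b.subst k s)
  | .lam a, k, s => .lam (a.subst (k + 1) (s.lift 0))
  | .pair a b, k, s => .pair (a.subst k s) (b.subst k s)
  | .p1 a, k, s => .p1 (a.subst k s)
  | .p2 a, k, s => .p2 (a.subst k s)

/-- One-step R-reduction: compatible closure of (β), (π₁), (π₂), (δπ), (π₁λ), (π₂λ). -/
inductive StepR : Tm → Tm → Prop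
  | beta {M N} : StepR (.app (.lam M) N) (M.subst 0 N)
  | pi1 {M N} : StepR (.p1 (.pair M N)) M
  | pi2 {M N} : StepR (.p2 (.pair M N)) N
  | dpi {M N P} : StepR (.app (.pair M N) P) (.pair (.app M P) (.app N P))
  | pi1lam {M} : StepR (.p1 (.lam M)) (.lam (.p1 M))
  | pi2lam {M} : StepR (.p2 (.lam M)) (.lam (.p2 M))
  | lam {M M'} : StepR M M' → StepR (.lam M) (.lam M')
  | appL {M M' N} : StepR M M' → StepR (.app M N) (.app M' N)
  | appR {M N N'} : StepR N N' → StepR (.app M N) (.app M N')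
  | pairL {M M' N} : StepR M M' → StepR (.pair M N) (.pair M' N)
  | pairR {M N N'} : StepR N N' → StepR (.pair M N) (.pair M N')
  | p1 {M M'} : StepR M M' → StepR (.p1 M) (.p1 M')
  | p2 {M M'} : StepR M M' → StepR (.p2 M) (.p2 M')

/-! Tait–Martin-Löf's method with Takahashi's complete developments. The six rules are
left-linear and have no critical pairs, so parallel reduction `Par` (contract any set of redexes
already present in the term, simultaneously) lies between →_R and →_R*, and every parallel reduct
of `M` reduces in one parallel step to the complete development `cd M`, which contracts all
redexes of `M`. So `Par` has the diamond property, and its reflexive-transitive closure, which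
is →_R*, is confluent. -/

namespace Tm

theorem lift_lift (M : Tm) {i j : Nat} (h : i ≤ j) :
    (M.lift j).lift i = (M.lift i).lift (j + 1) := by
  induction M generalizing i j with
  | var => grind [lift]
  | lam _ ih => simp [lift, ih (Nat.succ_le_succ h)]
  | _ => simp_all [lift]

theorem subst_lift (M : Tm) (k : Nat) (s : Tm) : (M.lift k).subst k s = M := by
  induction M generalizing k s with
  | var => grind [lift, subst]
  | _ => simp_all [lift, subst]

theorem lift_subst_of_le (M : Tm) {k d : Nat} (s : Tm) (h : k ≤ d) :
    (M.subst k s).lift d = (M.lift (d + 1)).subst k (s.lift d) := by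
  induction M generalizing k d s with
  | var => grind [lift, subst]
  | lam _ ih => simp [subst, lift, ih (s.lift 0) (Nat.succ_le_succ h), lift_lift s (Nat.zero_le d)]
  | _ => simp_all [subst, lift]

theorem lift_subst_of_ge (M : Tm) {k d : Nat} (s : Tm) (h : d ≤ k) :
    (M.subst k s).lift d = (M.lift d).subst (k + 1) (s.lift d) := by
  induction M generalizing k d s with
  | var => grind [lift, subst]
  | lam _ ih => simp [subst, lift, ih (s.lift 0) (Nat.succ_le_succ h), lift_lift s (Nat.zero_le d)]
  | _ => simp_all [subst, lift]

theorem subst_subst (M : Tm) {j k : Nat} (N s : Tm) (h : j ≤ k) :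
    (M.subst j N).subst k s = (M.subst (k + 1) (s.lift j)).subst j (N.subst k s) := by
  induction M generalizing j k N s with
  | var => grind [subst, subst_lift]
  | lam _ ih =>
    simp only [subst, ih (N.lift 0) (s.lift 0) (Nat.succ_le_succ h), lift_lift s (Nat.zero_le j),
      lift_subst_of_ge N s (Nat.zero_le k)]
  | _ => simp_all [subst]

end Tm

inductive Par : Tm → Tm → Prop
  | var (n) : Par (.var n) (.var n)
  | app {M M' N N'} : Par M M' → Par N N' → Par (.app M N) (.app M' N')
  | lam {M M'} : Par M M' → Par (.lam M) (.lam M')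
  | pair {M M' N N'} : Par M M' → Par N N' → Par (.pair M N) (.pair M' N')
  | p1 {M M'} : Par M M' → Par (.p1 M) (.p1 M')
  | p2 {M M'} : Par M M' → Par (.p2 M) (.p2 M')
  | beta {M M' N N'} : Par M M' → Par N N' → Par (.app (.lam M) N) (M'.subst 0 N')
  | pi1 {M M' N} : Par M M' → Par (.p1 (.pair M N)) M'
  | pi2 {M N N'} : Par N N' → Par (.p2 (.pair M N)) N'
  | dpi {M M' N N' P P'} : Par M M' → Par N N' → Par P P' →
      Par (.app (.pair M N) P) (.pair (.app M' P') (.app N' P'))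
  | pi1lam {M M'} : Par M M' → Par (.p1 (.lam M)) (.lam (.p1 M'))
  | pi2lam {M M'} : Par M M' → Par (.p2 (.lam M)) (.lam (.p2 M'))

namespace Par

theorem refl : ∀ M : Tm, Par M M
  | .var n => .var n
  | .app a b => .app (refl a) (refl b)
  | .lam a => .lam (refl a)
  | .pair a b => .pair (refl a) (refl b)
  | .p1 a => .p1 (refl a)
  | .p2 a => .p2 (refl a)

theorem lift {M M' : Tm} (h : Par M M') (d : Nat) : Par (M.lift d) (M'.lift d) := by
  induction h generalizing d with
  | var n => exact refl _
  | app _ _ ih₁ ih₂ => exact .app (ih₁ d) (ih₂ d)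
  | lam _ ih => exact .lam (ih (d + 1))
  | pair _ _ ih₁ ih₂ => exact .pair (ih₁ d) (ih₂ d)
  | p1 _ ih => exact .p1 (ih d)
  | p2 _ ih => exact .p2 (ih d)
  | beta _ _ ih₁ ih₂ =>
    rw [Tm.lift_subst_of_le _ _ (Nat.zero_le d)]
    exact .beta (ih₁ (d + 1)) (ih₂ d)
  | pi1 _ ih => exact .pi1 (ih d)
  | pi2 _ ih => exact .pi2 (ih d)
  | dpi _ _ _ ih₁ ih₂ ih₃ => exact .dpi (ih₁ d) (ih₂ d) (ih₃ d)
  | pi1lam _ ih => exact .pi1lam (ih (d + 1))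
  | pi2lam _ ih => exact .pi2lam (ih (d + 1))

theorem subst {M M' s s' : Tm} (h : Par M M') (hs : Par s s') (k : Nat) :
    Par (M.subst k s) (M'.subst k s') := by
  induction h generalizing k s s' with
  | var n => simp only [Tm.subst]; split_ifs <;> first | exact hs | exact refl _
  | app _ _ ih₁ ih₂ => exact .app (ih₁ hs k) (ih₂ hs k)
  | lam _ ih => exact .lam (ih (hs.lift 0) (k + 1))
  | pair _ _ ih₁ ih₂ => exact .pair (ih₁ hs k) (ih₂ hs k)
  | p1 _ ih => exact .p1 (ih hs k)
  | p2 _ ih => exact .p2 (ih hs k)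
  | beta _ _ ih₁ ih₂ =>
    rw [Tm.subst_subst _ _ _ (Nat.zero_le k)]
    exact .beta (ih₁ (hs.lift 0) (k + 1)) (ih₂ hs k)
  | pi1 _ ih => exact .pi1 (ih hs k)
  | pi2 _ ih => exact .pi2 (ih hs k)
  | dpi _ _ _ ih₁ ih₂ ih₃ => exact .dpi (ih₁ hs k) (ih₂ hs k) (ih₃ hs k)
  | pi1lam _ ih => exact .pi1lam (ih (hs.lift 0) (k + 1))
  | pi2lam _ ih => exact .pi2lam (ih (hs.lift 0) (k + 1))

end Par

def cd : Tm → Tm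
  | .var n => .var n
  | .lam M => .lam (cd M)
  | .pair M N => .pair (cd M) (cd N)
  | .app (.lam M) N => (cd M).subst 0 (cd N)
  | .app (.pair M N) P => .pair (.app (cd M) (cd P)) (.app (cd N) (cd P))
  | .app M N => .app (cd M) (cd N)
  | .p1 (.pair M _) => cd M
  | .p1 (.lam M) => .lam (.p1 (cd M))
  | .p1 M => .p1 (cd M)
  | .p2 (.pair _ N) => cd N
  | .p2 (.lam M) => .lam (.p2 (cd M))
  | .p2 M => .p2 (cd M)

namespace Par

theorem app_cd {M M' N N' : Tm} (hM : Par M M') (ihM : Par M' (cd M)) (ihN : Par N' (cd N)) :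
    Par (.app M' N') (cd (.app M N)) := by
  cases M with
  | lam =>
    cases hM with | lam => cases ihM with | lam h => exact .beta h ihN
  | pair =>
    cases hM with | pair => cases ihM with | pair h₁ h₂ => exact .dpi h₁ h₂ ihN
  | _ => exact .app ihM ihN

theorem p1_cd {M M' : Tm} (hM : Par M M') (ihM : Par M' (cd M)) :
    Par (.p1 M') (cd (.p1 M)) := by
  cases M with
  | lam =>
    cases hM with | lam => cases ihM with | lam h => exact .pi1lam h
  | pair =>
    cases hM with | pair => cases ihM with | pair h₁ _ => exact .pi1 h₁
  | _ => exact .p1 ihM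

theorem p2_cd {M M' : Tm} (hM : Par M M') (ihM : Par M' (cd M)) :
    Par (.p2 M') (cd (.p2 M)) := by
  cases M with
  | lam =>
    cases hM with | lam => cases ihM with | lam h => exact .pi2lam h
  | pair =>
    cases hM with | pair => cases ihM with | pair _ h₂ => exact .pi2 h₂
  | _ => exact .p2 ihM

theorem triangle {M M' : Tm} (h : Par M M') : Par M' (cd M) := by
  induction h with
  | var n => exact .var n
  | app hM _ ihM ihN => exact app_cd hM ihM ihN
  | lam _ ih => exact .lam ih
  | pair _ _ ih₁ ih₂ => exact .pair ih₁ ih₂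
  | p1 hM ih => exact p1_cd hM ih
  | p2 hM ih => exact p2_cd hM ih
  | beta _ _ ih₁ ih₂ => exact ih₁.subst ih₂ 0
  | pi1 _ ih => exact ih
  | pi2 _ ih => exact ih
  | dpi _ _ _ ih₁ ih₂ ih₃ => exact .pair (.app ih₁ ih₃) (.app ih₂ ih₃)
  | pi1lam _ ih => exact .lam (.p1 ih)
  | pi2lam _ ih => exact .lam (.p2 ih)

end Par

open Relation

theorem StepR.par {M M' : Tm} (h : StepR M M') : Par M M' := by
  induction h with
  | beta => exact .beta (.refl _) (.refl _)
  | pi1 => exact .pi1 (.refl _)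
  | pi2 => exact .pi2 (.refl _)
  | dpi => exact .dpi (.refl _) (.refl _) (.refl _)
  | pi1lam => exact .pi1lam (.refl _)
  | pi2lam => exact .pi2lam (.refl _)
  | lam _ ih => exact .lam ih
  | appL _ ih => exact .app ih (.refl _)
  | appR _ ih => exact .app (.refl _) ih
  | pairL _ ih => exact .pair ih (.refl _)
  | pairR _ ih => exact .pair (.refl _) ih
  | p1 _ ih => exact .p1 ih
  | p2 _ ih => exact .p2 ih

namespace StepR

theorem reflTransGen_lam {M M' : Tm} (h : ReflTransGen StepR M M') :
    ReflTransGen StepR (.lam M) (.lam M') :=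
  ReflTransGen.lift Tm.lam (fun _ _ => lam) _ _ h

theorem reflTransGen_p1 {M M' : Tm} (h : ReflTransGen StepR M M') :
    ReflTransGen StepR (.p1 M) (.p1 M') :=
  ReflTransGen.lift Tm.p1 (fun _ _ => p1) _ _ h

theorem reflTransGen_p2 {M M' : Tm} (h : ReflTransGen StepR M M') :
    ReflTransGen StepR (.p2 M) (.p2 M') :=
  ReflTransGen.lift Tm.p2 (fun _ _ => p2) _ _ h

theorem reflTransGen_app {M M' N N' : Tm} (hM : ReflTransGen StepR M M')
    (hN : ReflTransGen StepR N N') : ReflTransGen StepR (.app M N) (.app M' N') :=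
  (ReflTransGen.lift (Tm.app · N) (fun _ _ => appL) _ _ hM).trans
    (ReflTransGen.lift (Tm.app M') (fun _ _ => appR) _ _ hN)

theorem reflTransGen_pair {M M' N N' : Tm} (hM : ReflTransGen StepR M M')
    (hN : ReflTransGen StepR N N') : ReflTransGen StepR (.pair M N) (.pair M' N') :=
  (ReflTransGen.lift (Tm.pair · N) (fun _ _ => pairL) _ _ hM).trans
    (ReflTransGen.lift (Tm.pair M') (fun _ _ => pairR) _ _ hN)

end StepR

open StepR in
theorem Par.reflTransGen_stepR {M M' : Tm} (h : Par M M') : ReflTransGen StepR M M' := by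
  induction h with
  | var n => exact .refl
  | app _ _ ih₁ ih₂ => exact reflTransGen_app ih₁ ih₂
  | lam _ ih => exact reflTransGen_lam ih
  | pair _ _ ih₁ ih₂ => exact reflTransGen_pair ih₁ ih₂
  | p1 _ ih => exact reflTransGen_p1 ih
  | p2 _ ih => exact reflTransGen_p2 ih
  | beta _ _ ih₁ ih₂ => exact (reflTransGen_app (reflTransGen_lam ih₁) ih₂).tail StepR.beta
  | pi1 _ ih => exact .head StepR.pi1 ih
  | pi2 _ ih => exact .head StepR.pi2 ih
  | dpi _ _ _ ih₁ ih₂ ih₃ =>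
    exact .head StepR.dpi (reflTransGen_pair (reflTransGen_app ih₁ ih₃) (reflTransGen_app ih₂ ih₃))
  | pi1lam _ ih => exact .head StepR.pi1lam (reflTransGen_lam (reflTransGen_p1 ih))
  | pi2lam _ ih => exact .head StepR.pi2lam (reflTransGen_lam (reflTransGen_p2 ih))

theorem reflTransGen_par_eq_reflTransGen_stepR : ReflTransGen Par = ReflTransGen StepR :=
  le_antisymm (reflTransGen_closed fun _ _ => Par.reflTransGen_stepR)
    (ReflTransGen.mono fun _ _ => StepR.par)

/-- The reduction relation →_R is confluent. -/
theorem stepR_confluent (M N₁ N₂ : Tm)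
    (h₁ : Relation.ReflTransGen StepR M N₁) (h₂ : Relation.ReflTransGen StepR M N₂) :
    ∃ P, Relation.ReflTransGen StepR N₁ P ∧ Relation.ReflTransGen StepR N₂ P := by
  rw [← reflTransGen_par_eq_reflTransGen_stepR] at h₁ h₂ ⊢
  exact church_rosser (fun M _ _ h h' => ⟨cd M, .single h.triangle, .single h'.triangle⟩) h₁ h₂
end

section
/- The parallel reduction relation ⇒_R (parallel reduction for β, projections, and the commutation axioms δπ, π₁λ, π₂λ) satisfies the diamond property: if M ⇒_R N₁ and M ⇒_R N₂, then there is a term P such that N₁ ⇒_R P and N₂ ⇒_R P. -/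
/-- Parallel R-reduction. -/
inductive ParR : Tm → Tm → Prop
  | refl {M} : ParR M M
  | lam {M M'} : ParR M M' → ParR (.lam M) (.lam M')
  | app {M M' N N'} : ParR M M' → ParR N N' → ParR (.app M N) (.app M' N')
  | pair {M M' N N'} : ParR M M' → ParR N N' → ParR (.pair M N) (.pair M' N')
  | p1 {M M'} : ParR M M' → ParR (.p1 M) (.p1 M')
  | p2 {M M'} : ParR M M' → ParR (.p2 M) (.p2 M')
  | beta {M M' N N'} : ParR M M' → ParR N N' → ParR (.app (.lam M) N) (M'.subst 0 N')
  | pi1 {M M' N} : ParR M M' → ParR (.p1 (.pair M N)) M'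
  | pi2 {M N N'} : ParR N N' → ParR (.p2 (.pair M N)) N'
  | dpi {M M' N N' P P'} : ParR M M' → ParR N N' → ParR P P' →
      ParR (.app (.pair M N) P) (.pair (.app M' P') (.app N' P'))
  | pi1lam {M M'} : ParR M M' → ParR (.p1 (.lam M)) (.lam (.p1 M'))
  | pi2lam {M M'} : ParR M M' → ParR (.p2 (.lam M)) (.lam (.p2 M'))

namespace Aux

theorem lift_lift (M : Tm) : ∀ d e, d ≤ e →
    (M.lift d).lift (e+1) = (M.lift e).lift d := by
  induction M with
  | var n => intro d e h; simp only [Tm.lift]; split_ifs <;> simp [Tm.lift] <;> split_ifs <;>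
      first | rfl | omega
  | app a b iha ihb => intro d e h; simp [Tm.lift, iha _ _ h, ihb _ _ h]
  | lam a iha => intro d e h; simp [Tm.lift, iha (d+1) (e+1) (by omega)]
  | pair a b iha ihb => intro d e h; simp [Tm.lift, iha _ _ h, ihb _ _ h]
  | p1 a iha => intro d e h; simp [Tm.lift, iha _ _ h]
  | p2 a iha => intro d e h; simp [Tm.lift, iha _ _ h]

theorem lift_subst_le (M : Tm) : ∀ N d k, d ≤ k →
    (M.subst k N).lift d = (M.lift d).subst (k+1) (N.lift d) := by
  induction M with
  | var n =>
    intro N d k h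
    simp only [Tm.subst, Tm.lift]
    split_ifs <;> simp [Tm.subst, Tm.lift] <;> split_ifs <;>
      first | rfl | omega | (congr 1; omega)
  | app a b iha ihb => intro N d k h; simp [Tm.subst, Tm.lift, iha _ _ _ h, ihb _ _ _ h]
  | lam a iha =>
    intro N d k h
    simp only [Tm.subst, Tm.lift, iha (N.lift 0) (d+1) (k+1) (by omega)]
    rw [lift_lift N 0 d (by omega)]
  | pair a b iha ihb => intro N d k h; simp [Tm.subst, Tm.lift, iha _ _ _ h, ihb _ _ _ h]
  | p1 a iha => intro N d k h; simp [Tm.subst, Tm.lift, iha _ _ _ h]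
  | p2 a iha => intro N d k h; simp [Tm.subst, Tm.lift, iha _ _ _ h]

theorem lift_subst_ge (M : Tm) : ∀ N d k, k ≤ d →
    (M.subst k N).lift d = (M.lift (d+1)).subst k (N.lift d) := by
  induction M with
  | var n =>
    intro N d k h
    simp only [Tm.subst, Tm.lift]
    split_ifs <;> simp [Tm.subst, Tm.lift] <;> split_ifs <;>
      first | rfl | omega | (congr 1; omega)
  | app a b iha ihb => intro N d k h; simp [Tm.subst, Tm.lift, iha _ _ _ h, ihb _ _ _ h]
  | lam a iha =>
    intro N d k h
    simp only [Tm.subst, Tm.lift, iha (N.lift 0) (d+1) (k+1) (by omega)]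
    rw [lift_lift N 0 d (by omega)]
  | pair a b iha ihb => intro N d k h; simp [Tm.subst, Tm.lift, iha _ _ _ h, ihb _ _ _ h]
  | p1 a iha => intro N d k h; simp [Tm.subst, Tm.lift, iha _ _ _ h]
  | p2 a iha => intro N d k h; simp [Tm.subst, Tm.lift, iha _ _ _ h]

theorem subst_lift_cancel (M : Tm) : ∀ N k, (M.lift k).subst k N = M := by
  induction M with
  | var n =>
    intro N k
    simp only [Tm.lift]
    split_ifs <;> simp [Tm.subst] <;> split_ifs <;> first | rfl | omega | (congr 1; omega)
  | app a b iha ihb => intro N k; simp [Tm.subst, Tm.lift, iha, ihb]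
  | lam a iha => intro N k; simp [Tm.subst, Tm.lift, iha]
  | pair a b iha ihb => intro N k; simp [Tm.subst, Tm.lift, iha, ihb]
  | p1 a iha => intro N k; simp [Tm.subst, Tm.lift, iha]
  | p2 a iha => intro N k; simp [Tm.subst, Tm.lift, iha]

theorem subst_subst (M : Tm) : ∀ N P j k, j ≤ k →
    (M.subst j N).subst k P = (M.subst (k+1) (P.lift j)).subst j (N.subst k P) := by
  induction M with
  | var n =>
    intro N P j k h
    simp only [Tm.subst]
    split_ifs <;> (try simp only [Tm.subst]) <;> (try split_ifs) <;>
      first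
        | rfl
        | omega
        | (exfalso; omega)
        | (congr 1; omega)
        | exact (subst_lift_cancel P (N.subst k P) j).symm
  | app a b iha ihb => intro N P j k h; simp [Tm.subst, iha _ _ _ _ h, ihb _ _ _ _ h]
  | lam a iha =>
    intro N P j k h
    simp only [Tm.subst, iha (N.lift 0) (P.lift 0) (j+1) (k+1) (by omega)]
    rw [lift_lift P 0 j (by omega), lift_subst_le N P 0 k (by omega)]
  | pair a b iha ihb => intro N P j k h; simp [Tm.subst, iha _ _ _ _ h, ihb _ _ _ _ h]
  | p1 a iha => intro N P j k h; simp [Tm.subst, iha _ _ _ _ h]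
  | p2 a iha => intro N P j k h; simp [Tm.subst, iha _ _ _ _ h]

theorem lift_par {M M' : Tm} (h : ParR M M') : ∀ d, ParR (M.lift d) (M'.lift d) := by
  induction h with
  | refl => intro d; exact ParR.refl
  | lam _ ih => intro d; exact ParR.lam (ih (d+1))
  | app _ _ ih1 ih2 => intro d; exact ParR.app (ih1 d) (ih2 d)
  | pair _ _ ih1 ih2 => intro d; exact ParR.pair (ih1 d) (ih2 d)
  | p1 _ ih => intro d; exact ParR.p1 (ih d)
  | p2 _ ih => intro d; exact ParR.p2 (ih d)
  | beta _ _ ih1 ih2 =>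
    intro d
    rw [lift_subst_ge _ _ d 0 (by omega)]
    exact ParR.beta (ih1 (d+1)) (ih2 d)
  | pi1 _ ih => intro d; exact ParR.pi1 (ih d)
  | pi2 _ ih => intro d; exact ParR.pi2 (ih d)
  | dpi _ _ _ ih1 ih2 ih3 => intro d; exact ParR.dpi (ih1 d) (ih2 d) (ih3 d)
  | pi1lam _ ih => intro d; exact ParR.pi1lam (ih (d+1))
  | pi2lam _ ih => intro d; exact ParR.pi2lam (ih (d+1))

theorem subst_par_right (M : Tm) : ∀ {N N' : Tm} (k : Nat), ParR N N' →
    ParR (M.subst k N) (M.subst k N') := by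
  induction M with
  | var n =>
    intro N N' k h
    simp only [Tm.subst]; split_ifs <;> first | exact h | exact ParR.refl
  | app a b iha ihb => intro N N' k h; exact ParR.app (iha k h) (ihb k h)
  | lam a iha => intro N N' k h; exact ParR.lam (iha (k+1) (lift_par h 0))
  | pair a b iha ihb => intro N N' k h; exact ParR.pair (iha k h) (ihb k h)
  | p1 a iha => intro N N' k h; exact ParR.p1 (iha k h)
  | p2 a iha => intro N N' k h; exact ParR.p2 (iha k h)

theorem subst_par {M M' : Tm} (h : ParR M M') : ∀ {N N' : Tm} (k : Nat), ParR N N' →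
    ParR (M.subst k N) (M'.subst k N') := by
  induction h with
  | refl => intro N N' k hn; exact subst_par_right _ k hn
  | lam _ ih => intro N N' k hn; exact ParR.lam (ih (k+1) (lift_par hn 0))
  | app _ _ ih1 ih2 => intro N N' k hn; exact ParR.app (ih1 k hn) (ih2 k hn)
  | pair _ _ ih1 ih2 => intro N N' k hn; exact ParR.pair (ih1 k hn) (ih2 k hn)
  | p1 _ ih => intro N N' k hn; exact ParR.p1 (ih k hn)
  | p2 _ ih => intro N N' k hn; exact ParR.p2 (ih k hn)
  | beta _ _ ih1 ih2 =>
    intro N N' k hn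
    rw [subst_subst _ _ _ 0 k (by omega)]
    exact ParR.beta (ih1 (k+1) (lift_par hn 0)) (ih2 k hn)
  | pi1 _ ih => intro N N' k hn; exact ParR.pi1 (ih k hn)
  | pi2 _ ih => intro N N' k hn; exact ParR.pi2 (ih k hn)
  | dpi _ _ _ ih1 ih2 ih3 => intro N N' k hn; exact ParR.dpi (ih1 k hn) (ih2 k hn) (ih3 k hn)
  | pi1lam _ ih => intro N N' k hn; exact ParR.pi1lam (ih (k+1) (lift_par hn 0))
  | pi2lam _ ih => intro N N' k hn; exact ParR.pi2lam (ih (k+1) (lift_par hn 0))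

/-- Complete development. -/
def cd : Tm → Tm
  | .var n => .var n
  | .app (.lam a) b => (cd a).subst 0 (cd b)
  | .app (.pair a b) p => .pair (.app (cd a) (cd p)) (.app (cd b) (cd p))
  | .app a b => .app (cd a) (cd b)
  | .lam a => .lam (cd a)
  | .pair a b => .pair (cd a) (cd b)
  | .p1 (.pair a _) => cd a
  | .p1 (.lam a) => .lam (.p1 (cd a))
  | .p1 a => .p1 (cd a)
  | .p2 (.pair _ b) => cd b
  | .p2 (.lam a) => .lam (.p2 (cd a))
  | .p2 a => .p2 (cd a)

theorem lam_inv {A Q : Tm} (h : ParR (.lam A) Q) : ∃ A', Q = .lam A' ∧ ParR A A' := by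
  cases h with
  | refl => exact ⟨A, rfl, ParR.refl⟩
  | lam h => exact ⟨_, rfl, h⟩

theorem pair_inv {A B Q : Tm} (h : ParR (.pair A B) Q) :
    ∃ A' B', Q = .pair A' B' ∧ ParR A A' ∧ ParR B B' := by
  cases h with
  | refl => exact ⟨A, B, rfl, ParR.refl, ParR.refl⟩
  | pair h1 h2 => exact ⟨_, _, rfl, h1, h2⟩

theorem lam_lam_inv {A B : Tm} (h : ParR (.lam A) (.lam B)) : ParR A B := by
  obtain ⟨A', hA, h'⟩ := lam_inv h
  cases hA; exact h'

theorem pair_pair_inv {A B A' B' : Tm} (h : ParR (.pair A B) (.pair A' B')) :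
    ParR A A' ∧ ParR B B' := by
  obtain ⟨X, Y, hXY, h1, h2⟩ := pair_inv h
  cases hXY; exact ⟨h1, h2⟩

theorem par_cd (M : Tm) : ParR M (cd M) := by
  induction M with
  | var n => exact ParR.refl
  | app a b iha ihb =>
    cases a with
    | lam a0 => exact ParR.beta (lam_lam_inv iha) ihb
    | pair a0 b0 =>
      obtain ⟨h1, h2⟩ := pair_pair_inv iha
      exact ParR.dpi h1 h2 ihb
    | var n => exact ParR.app iha ihb
    | app x y => exact ParR.app iha ihb
    | p1 x => exact ParR.app iha ihb
    | p2 x => exact ParR.app iha ihb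
  | lam a iha => exact ParR.lam iha
  | pair a b iha ihb => exact ParR.pair iha ihb
  | p1 a iha =>
    cases a with
    | pair a0 b0 => exact ParR.pi1 (pair_pair_inv iha).1
    | lam a0 => exact ParR.pi1lam (lam_lam_inv iha)
    | var n => exact ParR.p1 iha
    | app x y => exact ParR.p1 iha
    | p1 x => exact ParR.p1 iha
    | p2 x => exact ParR.p1 iha
  | p2 a iha =>
    cases a with
    | pair a0 b0 => exact ParR.pi2 (pair_pair_inv iha).2
    | lam a0 => exact ParR.pi2lam (lam_lam_inv iha)
    | var n => exact ParR.p2 iha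
    | app x y => exact ParR.p2 iha
    | p1 x => exact ParR.p2 iha
    | p2 x => exact ParR.p2 iha

theorem triangle {M N : Tm} (h : ParR M N) : ParR N (cd M) := by
  induction h with
  | @refl M => exact par_cd M
  | lam _ ih => exact ParR.lam ih
  | @app A A' B B' h1 h2 ih1 ih2 =>
    cases A with
    | lam a0 =>
      obtain ⟨a0', hA', ha⟩ := lam_inv h1
      subst hA'
      exact ParR.beta (lam_lam_inv ih1) ih2
    | pair a0 b0 =>
      obtain ⟨x, y, hA', hx, hy⟩ := pair_inv h1
      subst hA'
      obtain ⟨hx', hy'⟩ := pair_pair_inv ih1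
      exact ParR.dpi hx' hy' ih2
    | var n => exact ParR.app ih1 ih2
    | app x y => exact ParR.app ih1 ih2
    | p1 x => exact ParR.app ih1 ih2
    | p2 x => exact ParR.app ih1 ih2
  | pair _ _ ih1 ih2 => exact ParR.pair ih1 ih2
  | @p1 A A' h1 ih1 =>
    cases A with
    | pair a0 b0 =>
      obtain ⟨x, y, hA', hx, hy⟩ := pair_inv h1
      subst hA'
      exact ParR.pi1 (pair_pair_inv ih1).1
    | lam a0 =>
      obtain ⟨x, hA', hx⟩ := lam_inv h1
      subst hA'
      exact ParR.pi1lam (lam_lam_inv ih1)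
    | var n => exact ParR.p1 ih1
    | app x y => exact ParR.p1 ih1
    | p1 x => exact ParR.p1 ih1
    | p2 x => exact ParR.p1 ih1
  | @p2 A A' h1 ih1 =>
    cases A with
    | pair a0 b0 =>
      obtain ⟨x, y, hA', hx, hy⟩ := pair_inv h1
      subst hA'
      exact ParR.pi2 (pair_pair_inv ih1).2
    | lam a0 =>
      obtain ⟨x, hA', hx⟩ := lam_inv h1
      subst hA'
      exact ParR.pi2lam (lam_lam_inv ih1)
    | var n => exact ParR.p2 ih1
    | app x y => exact ParR.p2 ih1
    | p1 x => exact ParR.p2 ih1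
    | p2 x => exact ParR.p2 ih1
  | beta _ _ ih1 ih2 => exact subst_par ih1 0 ih2
  | pi1 _ ih => exact ih
  | pi2 _ ih => exact ih
  | dpi _ _ _ ih1 ih2 ih3 =>
    exact ParR.pair (ParR.app ih1 ih3) (ParR.app ih2 ih3)
  | pi1lam _ ih => exact ParR.lam (ParR.p1 ih)
  | pi2lam _ ih => exact ParR.lam (ParR.p2 ih)

end Aux

/-- Parallel R-reduction satisfies the diamond property. -/
theorem parR_diamond (M N₁ N₂ : Tm) (h₁ : ParR M N₁) (h₂ : ParR M N₂) :
    ∃ P, ParR N₁ P ∧ ParR N₂ P :=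
  ⟨Aux.cd M, Aux.triangle h₁, Aux.triangle h₂⟩
end

section
/- If λx.M ⇒_E N (a parallel η/SP-expansion from an abstraction), then there exists a term P such that N x →_R* P and M ⇒_E P. -/
/-- Parallel η/SP-expansion. -/
inductive ParE : Tm → Tm → Prop
  | refl {M} : ParE M M
  | lam {M M'} : ParE M M' → ParE (.lam M) (.lam M')
  | app {M M' N N'} : ParE M M' → ParE N N' → ParE (.app M N) (.app M' N')
  | pair {M M' N N'} : ParE M M' → ParE N N' → ParE (.pair M N) (.pair M' N')
  | p1 {M M'} : ParE M M' → ParE (.p1 M) (.p1 M')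
  | p2 {M M'} : ParE M M' → ParE (.p2 M) (.p2 M')
  | eta {M M'} : ParE M M' → ParE M (.lam (.app (M'.lift 0) (.var 0)))
  | sp {M M'} : ParE M M' → ParE M (.pair (.p1 M') (.p2 M'))

/-! The invariant carried through the induction on `λx.M ⇒_E N` also tracks `π₁N x` and
`π₂N x`: in the SP case `N = ⟨π₁N', π₂N'⟩`, `N x` reduces by (δπ) to `⟨π₁N' x, π₂N' x⟩`, and
both components must reach projections of one common expansion `Q` of `M`, so that
`⟨π₁Q, π₂Q⟩` is again an expansion of `M`.
An η-expansion `λy.N' y` is undone by a single β-step. -/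

open Relation

local infix:50 " ⟶* " => ReflTransGen StepR

namespace Tm

/-- The term `N x` for a fresh variable `x`. -/
def appFresh (N : Tm) : Tm := .app (N.lift 0) (.var 0)

theorem subst_lift_succ_var (t : Tm) (d : Nat) : (t.lift (d + 1)).subst d (.var d) = t := by
  induction t generalizing d with
  | var n =>
    rcases Nat.lt_trichotomy n d with h | rfl | h
    · simp [lift, subst, h, Nat.lt_succ_of_lt h, h.ne]
    · simp [lift, subst]
    · simp [lift, subst, show ¬n < d + 1 by omega, show n + 1 ≠ d by omega,
        show ¬n + 1 < d by omega]
  | lam a ih => simp [lift, subst, ih]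
  | _ => simp [lift, subst, *]

end Tm

open Tm

theorem stepR_appFresh_lam (M : Tm) : StepR (lam M).appFresh M := by
  simpa [appFresh, lift, subst_lift_succ_var M 0] using StepR.beta (M := M.lift 1) (N := .var 0)

theorem reflTransGen_p1 {M M' : Tm} (h : M ⟶* M') : p1 M ⟶* p1 M' :=
  ReflTransGen.lift Tm.p1 (fun _ _ => StepR.p1) _ _ h

theorem reflTransGen_p2 {M M' : Tm} (h : M ⟶* M') : p2 M ⟶* p2 M' :=
  ReflTransGen.lift Tm.p2 (fun _ _ => StepR.p2) _ _ h

theorem reflTransGen_pair {M M' N N' : Tm} (hM : M ⟶* M') (hN : N ⟶* N') :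
    pair M N ⟶* pair M' N' :=
  (ReflTransGen.lift (pair · N) (fun _ _ => StepR.pairL) _ _ hM).trans
    (ReflTransGen.lift (pair M' ·) (fun _ _ => StepR.pairR) _ _ hN)

theorem reflTransGen_appFresh_p1_lam (M : Tm) : (p1 (lam M)).appFresh ⟶* p1 M :=
  .head (StepR.appL StepR.pi1lam) (.single (stepR_appFresh_lam (p1 M)))

theorem reflTransGen_appFresh_p2_lam (M : Tm) : (p2 (lam M)).appFresh ⟶* p2 M :=
  .head (StepR.appL StepR.pi2lam) (.single (stepR_appFresh_lam (p2 M)))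

def AppFreshReducesToExpansion (M N : Tm) : Prop :=
  ∃ P Q, ParE M P ∧ ParE M Q ∧
    N.appFresh ⟶* P ∧ (p1 N).appFresh ⟶* p1 Q ∧ (p2 N).appFresh ⟶* p2 Q

namespace AppFreshReducesToExpansion

theorem of_lam {M M' : Tm} (h : ParE M M') : AppFreshReducesToExpansion M (lam M') :=
  ⟨M', M', h, h, .single (stepR_appFresh_lam M'),
    reflTransGen_appFresh_p1_lam M', reflTransGen_appFresh_p2_lam M'⟩

theorem eta {M N : Tm} (h : AppFreshReducesToExpansion M N) :
    AppFreshReducesToExpansion M (lam N.appFresh) := by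
  obtain ⟨P, -, hP, -, hNP, -, -⟩ := h
  exact ⟨P, P, hP, hP, .head (stepR_appFresh_lam _) hNP,
    (reflTransGen_appFresh_p1_lam _).trans (reflTransGen_p1 hNP),
    (reflTransGen_appFresh_p2_lam _).trans (reflTransGen_p2 hNP)⟩

theorem sp {M N : Tm} (h : AppFreshReducesToExpansion M N) :
    AppFreshReducesToExpansion M (pair (p1 N) (p2 N)) := by
  obtain ⟨-, Q, -, hQ, -, hN₁, hN₂⟩ := h
  exact ⟨pair (p1 Q) (p2 Q), Q, .sp hQ, hQ, .head StepR.dpi (reflTransGen_pair hN₁ hN₂),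
    .head (StepR.appL StepR.pi1) hN₁, .head (StepR.appL StepR.pi2) hN₂⟩

end AppFreshReducesToExpansion

theorem appFreshReducesToExpansion_of_parE_lam {M N : Tm} (h : ParE (lam M) N) :
    AppFreshReducesToExpansion M N := by
  generalize hA : lam M = A at h
  induction h with
  | refl => subst hA; exact .of_lam .refl
  | lam h => cases hA; exact .of_lam h
  | eta _ ih => exact (ih hA).eta
  | sp _ ih => exact (ih hA).sp
  | _ => cases hA

/-- If λx.M ⇒_E N then N x R-reduces to some P with M ⇒_E P
(the fresh variable x is rendered as de Bruijn index 0, with N lifted accordingly). -/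
theorem parE_lam_app (M N : Tm) (h : ParE (.lam M) N) :
    ∃ P, Relation.ReflTransGen StepR (.app (N.lift 0) (.var 0)) P ∧ ParE M P := by
  obtain ⟨P, -, hP, -, hNP, -⟩ := appFreshReducesToExpansion_of_parE_lam h
  exact ⟨P, hNP, hP⟩
end

section
/- If M and N are π-symmetric terms, then M[x:=N] is π-symmetric. -/
/-- Pure lambda terms (no pairing or projections), de Bruijn representation. -/
inductive PTm : Type
  | var : Nat → PTm
  | app : PTm → PTm → PTm
  | lam : PTm → PTm

def PTm.lift (d : Nat) : PTm → PTm
  | .var n => if n < d then .var n else .var (n + 1)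
  | .app a b => .app (a.lift d) (b.lift d)
  | .lam a => .lam (a.lift (d + 1))

def PTm.subst : PTm → Nat → PTm → PTm
  | .var n, k, s => if n = k then s else if n < k then .var n else .var (n - 1)
  | .app a b, k, s => .app (a.subst k s) (b.subst k s)
  | .lam a, k, s => .lam (a.subst (k + 1) (s.lift 0))

/-- βη-equivalence of pure lambda terms: the smallest congruence containing (β) and (η). -/
inductive BetaEta : PTm → PTm → Prop
  | beta {M N} : BetaEta (.app (.lam M) N) (M.subst 0 N)
  | eta {M} : BetaEta (.lam (.app (M.lift 0) (.var 0))) M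
  | refl {M} : BetaEta M M
  | symm {M N} : BetaEta M N → BetaEta N M
  | trans {M N P} : BetaEta M N → BetaEta N P → BetaEta M P
  | app {M M' N N'} : BetaEta M M' → BetaEta N N' → BetaEta (.app M N) (.app M' N')
  | lam {M M'} : BetaEta M M' → BetaEta (.lam M) (.lam M')

/-- π-erasure of a term. -/
def Tm.erase : Tm → PTm
  | .var n => .var n
  | .app a b => .app a.erase b.erase
  | .lam a => .lam a.erase
  | .pair a _ => a.erase
  | .p1 a => a.erase
  | .p2 a => a.erase

/-- A term is π-symmetric if the π-erasures of the two components of every pair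
subterm are βη-equivalent. -/
def Tm.PiSym : Tm → Prop
  | .var _ => True
  | .app a b => a.PiSym ∧ b.PiSym
  | .lam a => a.PiSym
  | .pair a b => a.PiSym ∧ b.PiSym ∧ BetaEta a.erase b.erase
  | .p1 a => a.PiSym
  | .p2 a => a.PiSym

/-!
Erasure commutes with lifting and substitution, so the pair clause reduces to the stability of
βη-equivalence of pure terms under lifting and substitution. For a β-step this is the
substitution lemma `PTm.subst_subst`; for an η-step it is the commutation of lifting with
lifting and with substitution. The rest is an induction on `M`, lifting `N` under binders.
-/

namespace PTm

theorem lift_lift {i j : Nat} (h : i ≤ j) (M : PTm) :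
    (M.lift j).lift i = (M.lift i).lift (j + 1) := by
  induction M generalizing i j with
  | var n => grind [lift]
  | app a b iha ihb => simp only [lift, iha h, ihb h]
  | lam a ih => simp only [lift, ih (Nat.succ_le_succ h)]

theorem subst_lift_self (i : Nat) (M T : PTm) : (M.lift i).subst i T = M := by
  induction M generalizing i T with
  | var n => grind [lift, subst]
  | app a b iha ihb => simp only [lift, subst, iha, ihb]
  | lam a ih => simp only [lift, subst, ih]

theorem lift_subst_of_le {i j : Nat} (h : i ≤ j) (M s : PTm) :
    (M.lift i).subst (j + 1) (s.lift i) = (M.subst j s).lift i := by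
  induction M generalizing i j s with
  | var n => grind [lift, subst]
  | app a b iha ihb => simp only [lift, subst, iha h, ihb h]
  | lam a ih =>
    simp only [lift, subst]
    rw [lift_lift (Nat.zero_le i), ih (Nat.succ_le_succ h)]

theorem subst_lift_of_le {k d : Nat} (h : k ≤ d) (M s : PTm) :
    (M.subst k s).lift d = (M.lift (d + 1)).subst k (s.lift d) := by
  induction M generalizing k d s with
  | var n => grind [lift, subst]
  | app a b iha ihb => simp only [lift, subst, iha h, ihb h]
  | lam a ih =>
    simp only [lift, subst]
    rw [lift_lift (Nat.zero_le d), ih (Nat.succ_le_succ h)]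

theorem subst_subst {i j : Nat} (h : i ≤ j) (M N S : PTm) :
    (M.subst i N).subst j S = (M.subst (j + 1) (S.lift i)).subst i (N.subst j S) := by
  induction M generalizing i j N S with
  | var n =>
    grind [subst, subst_lift_self]
  | app a b iha ihb => simp only [subst, iha h, ihb h]
  | lam a ih =>
    simp only [subst]
    rw [ih (Nat.succ_le_succ h), lift_lift (Nat.zero_le i), lift_subst_of_le (Nat.zero_le j)]

end PTm

namespace BetaEta

theorem lift {M N : PTm} (h : BetaEta M N) (d : Nat) : BetaEta (M.lift d) (N.lift d) := by
  induction h generalizing d with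
  | @beta M N =>
    rw [PTm.lift, PTm.lift, PTm.subst_lift_of_le (Nat.zero_le d)]
    exact .beta
  | @eta M =>
    simp only [PTm.lift, if_pos (Nat.zero_lt_succ d)]
    rw [← PTm.lift_lift (Nat.zero_le d)]
    exact .eta
  | refl => exact .refl
  | symm _ ih => exact (ih d).symm
  | trans _ _ ih₁ ih₂ => exact (ih₁ d).trans (ih₂ d)
  | app _ _ ih₁ ih₂ => exact (ih₁ d).app (ih₂ d)
  | lam _ ih => exact (ih (d + 1)).lam

theorem subst {M N : PTm} (h : BetaEta M N) (k : Nat) (S : PTm) :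
    BetaEta (M.subst k S) (N.subst k S) := by
  induction h generalizing k S with
  | @beta M N =>
    rw [PTm.subst, PTm.subst, PTm.subst_subst (Nat.zero_le k)]
    exact .beta
  | @eta M =>
    simp only [PTm.subst, if_neg (Nat.succ_ne_zero k).symm, if_pos (Nat.zero_lt_succ k)]
    rw [PTm.lift_subst_of_le (Nat.zero_le k)]
    exact .eta
  | refl => exact .refl
  | symm _ ih => exact (ih k S).symm
  | trans _ _ ih₁ ih₂ => exact (ih₁ k S).trans (ih₂ k S)
  | app _ _ ih₁ ih₂ => exact (ih₁ k S).app (ih₂ k S)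
  | lam _ ih => exact (ih (k + 1) (S.lift 0)).lam

end BetaEta

namespace Tm

theorem erase_lift (d : Nat) (M : Tm) : (M.lift d).erase = M.erase.lift d := by
  induction M generalizing d with
  | var n => simp only [lift, erase, PTm.lift]; split_ifs <;> rfl
  | _ => simp_all [lift, erase, PTm.lift]

theorem erase_subst (k : Nat) (M N : Tm) : (M.subst k N).erase = M.erase.subst k N.erase := by
  induction M generalizing k N with
  | var n => simp only [subst, erase, PTm.subst]; split_ifs <;> rfl
  | _ => simp_all [subst, erase, PTm.subst, erase_lift]

theorem PiSym.lift {M : Tm} (hM : M.PiSym) (d : Nat) : (M.lift d).PiSym := by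
  induction M generalizing d with
  | var n => simp only [Tm.lift]; split_ifs <;> trivial
  | app a b iha ihb => exact ⟨iha hM.1 d, ihb hM.2 d⟩
  | lam a ih => exact ih hM (d + 1)
  | pair a b iha ihb =>
    refine ⟨iha hM.1 d, ihb hM.2.1 d, ?_⟩
    rw [erase_lift, erase_lift]
    exact hM.2.2.lift d
  | p1 a ih => exact ih hM d
  | p2 a ih => exact ih hM d

end Tm

/-- Substitution preserves π-symmetry. -/
theorem piSym_subst (M N : Tm) (k : Nat) (hM : M.PiSym) (hN : N.PiSym) :
    (M.subst k N).PiSym := by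
  induction M generalizing N k with
  | var n => simp only [Tm.subst]; split_ifs <;> trivial
  | app a b iha ihb => exact ⟨iha _ _ hM.1 hN, ihb _ _ hM.2 hN⟩
  | lam a ih => exact ih _ _ hM (hN.lift 0)
  | pair a b iha ihb =>
    refine ⟨iha _ _ hM.1 hN, ihb _ _ hM.2.1 hN, ?_⟩
    rw [Tm.erase_subst, Tm.erase_subst]
    exact hM.2.2.subst k N.erase
  | p1 a ih => exact ih _ _ hM hN
  | p2 a ih => exact ih _ _ hM hN
end
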